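/- For any λ12, λ13, λ23 ∈ [0,1] with 1 ≤ λ12 + λ13 + λ23 ≤ 1 + 2·min{λ12, λ13, λ23}, and any α satisfying (1/2)·max(0, λ12+λ13+λ23 − min{λ12,λ13,λ23} − 1) ≤ α and α ≤ (1/2)·min{λ12, λ13, λ23, λ12+λ13+λ23−1}, the assignment p000 = (1/2)(λ12+λ13+λ23−1) − α, p001 = (1/2)(1−λ13−λ23) + α, p010 = (1/2)(1−λ12−λ23) + α, p011 = (1/2)λ23 − α, p100 = (1/2)(1−λ12−λ13) + α, p101 = (1/2)λ13 − α, p110 = (1/2)λ12 − α, p111 = α defines a probability distribution on {0,1}³ with Bernoulli(1/2) marginals and pairwise concurrence probabilities λ12, λ13, λ23. -/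

import Mathlib

theorem stmt4 (l12 l13 l23 α : ℝ)
    (hα1 : (1/2) * max 0 (l12 + l13 + l23 - min (min l12 l13) l23 - 1) ≤ α)
    (hα2 : α ≤ (1/2) * min (min (min l12 l13) l23) (l12 + l13 + l23 - 1)) :
    let p : Bool × Bool × Bool → ℝ := fun x =>
      match x with
      | (false, false, false) => (1/2) * (l12 + l13 + l23 - 1) - α
      | (false, false, true)  => (1/2) * (1 - l13 - l23) + α
      | (false, true,  false) => (1/2) * (1 - l12 - l23) + α
      | (false, true,  true)  => (1/2) * l23 - α
      | (true,  false, false) => (1/2) * (1 - l12 - l13) + α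
      | (true,  false, true)  => (1/2) * l13 - α
      | (true,  true,  false) => (1/2) * l12 - α
      | (true,  true,  true)  => α
    (∀ x, 0 ≤ p x) ∧ (∑ x, p x) = 1 ∧
      (∑ x ∈ Finset.univ.filter (fun x : Bool × Bool × Bool => x.1 = true), p x) = 1/2 ∧
      (∑ x ∈ Finset.univ.filter (fun x : Bool × Bool × Bool => x.2.1 = true), p x) = 1/2 ∧
      (∑ x ∈ Finset.univ.filter (fun x : Bool × Bool × Bool => x.2.2 = true), p x) = 1/2 ∧
      (∑ x ∈ Finset.univ.filter (fun x : Bool × Bool × Bool => x.1 = x.2.1), p x) = l12 ∧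
      (∑ x ∈ Finset.univ.filter (fun x : Bool × Bool × Bool => x.1 = x.2.2), p x) = l13 ∧
      (∑ x ∈ Finset.univ.filter (fun x : Bool × Bool × Bool => x.2.1 = x.2.2), p x) = l23 := by
  set m := min (min l12 l13) l23
  have hm12 : m ≤ l12 := (min_le_left _ _).trans (min_le_left _ _)
  have hm13 : m ≤ l13 := (min_le_left _ _).trans (min_le_right _ _)
  have hm23 : m ≤ l23 := min_le_right _ _
  -- The lower bound on α makes the weights with `+ α` nonnegative, the upper one those with `- α`.
  have hα_lower : 0 ≤ 2 * α ∧ l12 + l13 + l23 - m - 1 ≤ 2 * α := by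
    constructor <;> linarith [le_max_left 0 (l12 + l13 + l23 - m - 1),
      le_max_right 0 (l12 + l13 + l23 - m - 1)]
  have hα_upper : 2 * α ≤ m ∧ 2 * α ≤ l12 + l13 + l23 - 1 := by
    constructor <;> linarith [min_le_left m (l12 + l13 + l23 - 1),
      min_le_right m (l12 + l13 + l23 - 1)]
  intro p
  refine ⟨?_, ?_, ?_, ?_, ?_, ?_, ?_, ?_⟩
  · rintro ⟨_ | _, _ | _, _ | _⟩ <;> simp only [p] <;> linarith
  all_goals
    simp only [p, Finset.sum_filter, Fintype.sum_prod_type, Fintype.sum_bool, Bool.true_eq_false,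
      Bool.false_eq_true, if_true, if_false]
    ring
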